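/- Let v ∈ C^{γ}(ℝⁿ) with γ ∈ (2,3), and w_{ρ,ω}(x) = 2v(x) − v(x+ρω) − v(x−ρω). Then |w_{ρ,ω}(x) − w_{ρ,ω}(y)| ≤ C [v]_{C^γ(ℝⁿ)} min{ρ² |x−y|^{γ−2}, ρ^{γ−1} |x−y|}. -/

import Mathlib

/-!
Put `h = ρ • ω`, `α = γ - 2` and `w = symmSecondDiff v h`. On a line, a symmetric second difference
is controlled by the Hölder modulus of the first derivative: if `‖g' s - g' t‖ ≤ M |s - t| ^ α`,
then `s ↦ 2 g 0 - g s - g (-s)` vanishes at `0` and its derivative `g' (-s) - g' s` has norm at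
most `2 ^ α M s ^ α`, so `‖2 g 0 - g ρ - g (-ρ)‖ ≤ 2 ^ α M ρ ^ (α + 1) / (α + 1)`.

For `g t = v (x + t h) - v (y + t h)` the derivative is Lipschitz with constant
`M ‖x - y‖ ^ α ρ ^ 2`, which gives the `ρ ^ 2 ‖x - y‖ ^ α` bound. For `g t = Dv (z + t h)` it bounds
`Dw z = 2 Dv z - Dv (z + h) - Dv (z - h)` by `2 ^ α M ρ ^ (α + 1) / (α + 1)`, and the mean value
theorem gives the `ρ ^ (γ - 1) ‖x - y‖` bound. Bernoulli's inequality `2 ^ α ≤ 1 + α` gives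
`C = 1`.
-/

open Set

section Algebra

variable {E F : Type*} [AddCommGroup E] [AddCommGroup F] [Module ℝ F]

def symmSecondDiff (f : E → F) (h x : E) : F := (2 : ℝ) • f x - f (x + h) - f (x - h)

theorem symmSecondDiff_sub (f g : E → F) (h x : E) :
    symmSecondDiff (f - g) h x = symmSecondDiff f h x - symmSecondDiff g h x := by
  simp only [symmSecondDiff, Pi.sub_apply, smul_sub]
  abel

theorem symmSecondDiff_comp_add_smul [Module ℝ E] (f : E → F) (h x : E) :
    symmSecondDiff (fun t : ℝ => f (x + t • h)) 1 0 = symmSecondDiff f h x := by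
  simp [symmSecondDiff, sub_eq_add_neg]

end Algebra

section Calculus

variable {E F : Type*} [NormedAddCommGroup E] [NormedSpace ℝ E]
  [NormedAddCommGroup F] [NormedSpace ℝ F]

theorem hasFDerivAt_symmSecondDiff {f : E → F} (hf : Differentiable ℝ f) (h x : E) :
    HasFDerivAt (symmSecondDiff f h) (symmSecondDiff (fderiv ℝ f) h x) x := by
  have hplus : HasFDerivAt (fun y => f (y + h)) (fderiv ℝ f (x + h)) x :=
    (hasFDerivAt_comp_add_right h).2 (hf _).hasFDerivAt
  have hminus : HasFDerivAt (fun y => f (y - h)) (fderiv ℝ f (x - h)) x := by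
    simpa only [sub_eq_add_neg] using (hasFDerivAt_comp_add_right (-h)).2 (hf _).hasFDerivAt
  exact (((hf x).hasFDerivAt.const_smul (2 : ℝ)).sub hplus).sub hminus

theorem hasDerivAt_comp_add_smul {f : E → F} {x h : E} {t : ℝ}
    (hf : DifferentiableAt ℝ f (x + t • h)) :
    HasDerivAt (fun s : ℝ => f (x + s • h)) (fderiv ℝ f (x + t • h) h) t := by
  have hline : HasDerivAt (fun s : ℝ => x + s • h) h t := by
    simpa using ((hasDerivAt_id t).smul_const h).const_add x
  exact hf.hasFDerivAt.comp_hasDerivAt t hline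

theorem norm_fderiv_fderiv_sub_le (f : E → F) (a b : E) :
    ‖fderiv ℝ (fderiv ℝ f) a - fderiv ℝ (fderiv ℝ f) b‖ ≤
      ‖iteratedFDeriv ℝ 2 f a - iteratedFDeriv ℝ 2 f b‖ := by
  refine ContinuousLinearMap.opNorm_le_bound₂ _ (norm_nonneg _) fun p q => ?_
  have h := (iteratedFDeriv ℝ 2 f a - iteratedFDeriv ℝ 2 f b).le_opNorm ![p, q]
  simpa [iteratedFDeriv_two_apply, Fin.prod_univ_two, mul_assoc] using h

theorem norm_symmSecondDiff_le_of_holder_deriv {g g' : ℝ → F} {M α ρ : ℝ}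
    (hg : ∀ t, HasDerivAt g (g' t) t) (hg' : ∀ s t, ‖g' s - g' t‖ ≤ M * |s - t| ^ α)
    (hα : 0 ≤ α) (hρ : 0 ≤ ρ) :
    ‖symmSecondDiff g ρ 0‖ ≤ 2 ^ α / (α + 1) * M * ρ ^ (α + 1) := by
  have hf : ∀ s, HasDerivAt (fun s => symmSecondDiff g s 0) (g' (-s) - g' s) s := by
    intro s
    have h := ((hasDerivAt_const s ((2 : ℝ) • g 0)).sub
      ((hg (0 + s)).comp_const_add 0 s)).sub ((hg (0 - s)).comp_const_sub 0 s)
    convert h using 1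
    · ext t; simp [symmSecondDiff]
    · rw [zero_sub, zero_add, zero_sub, sub_neg_eq_add]
      abel
  have hB : ∀ s, HasDerivAt (fun s => 2 ^ α / (α + 1) * M * s ^ (α + 1))
      (2 ^ α * M * s ^ α) s := by
    intro s
    refine ((Real.hasDerivAt_rpow_const (Or.inr (by linarith))).const_mul _).congr_deriv ?_
    rw [add_sub_cancel_right]
    field_simp
  have hbound : ∀ s ∈ Ico 0 ρ, ‖g' (-s) - g' s‖ ≤ 2 ^ α * M * s ^ α := by
    intro s hs
    calc ‖g' (-s) - g' s‖ ≤ M * |-s - s| ^ α := hg' _ _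
      _ = 2 ^ α * M * s ^ α := by
        rw [show -s - s = -(2 * s) by ring, abs_neg, abs_of_nonneg (by linarith [hs.1]),
          Real.mul_rpow zero_le_two hs.1]
        ring
  refine image_norm_le_of_norm_deriv_right_le_deriv_boundary
    (fun s _ => (hf s).continuousAt.continuousWithinAt) (fun s _ => (hf s).hasDerivWithinAt)
    ?_ hB hbound ⟨hρ, le_rfl⟩
  simp [symmSecondDiff, two_smul, Real.zero_rpow (by linarith : α + 1 ≠ 0)]

theorem norm_symmSecondDiff_fderiv_le {f : E → F} {M α : ℝ} (hf : ContDiff ℝ 2 f)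
    (hM : ∀ x y, ‖fderiv ℝ (fderiv ℝ f) x - fderiv ℝ (fderiv ℝ f) y‖ ≤ M * ‖x - y‖ ^ α)
    (hα : 0 ≤ α) (h x : E) :
    ‖symmSecondDiff (fderiv ℝ f) h x‖ ≤ 2 ^ α / (α + 1) * M * ‖h‖ ^ (α + 1) := by
  have hf' : Differentiable ℝ (fderiv ℝ f) :=
    (hf.fderiv_right (m := 1) le_rfl).differentiable one_ne_zero
  have hg : ∀ t : ℝ, HasDerivAt (fun s : ℝ => fderiv ℝ f (x + s • h))
      (fderiv ℝ (fderiv ℝ f) (x + t • h) h) t :=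
    fun t => hasDerivAt_comp_add_smul (hf' _)
  have hg' : ∀ s t : ℝ,
      ‖fderiv ℝ (fderiv ℝ f) (x + s • h) h - fderiv ℝ (fderiv ℝ f) (x + t • h) h‖ ≤
        M * ‖h‖ ^ α * ‖h‖ * |s - t| ^ α := by
    intro s t
    calc _ = ‖(fderiv ℝ (fderiv ℝ f) (x + s • h) - fderiv ℝ (fderiv ℝ f) (x + t • h)) h‖ := rfl
      _ ≤ M * ‖(x + s • h) - (x + t • h)‖ ^ α * ‖h‖ := (ContinuousLinearMap.le_opNorm _ _).trans
          (mul_le_mul_of_nonneg_right (hM _ _) (norm_nonneg _))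
      _ = M * ‖h‖ ^ α * ‖h‖ * |s - t| ^ α := by
          rw [add_sub_add_left_eq_sub, ← sub_smul, norm_smul, Real.norm_eq_abs,
            Real.mul_rpow (abs_nonneg _) (norm_nonneg _)]
          ring
  have key := norm_symmSecondDiff_le_of_holder_deriv hg hg' hα zero_le_one
  rw [symmSecondDiff_comp_add_smul, Real.one_rpow, mul_one] at key
  rw [Real.rpow_add_one' (norm_nonneg _) (by linarith)]
  linarith

theorem norm_symmSecondDiff_sub_le_mul_norm_sq {f : E → F} {M α : ℝ} (hf : ContDiff ℝ 2 f)
    (hM : ∀ x y, ‖fderiv ℝ (fderiv ℝ f) x - fderiv ℝ (fderiv ℝ f) y‖ ≤ M * ‖x - y‖ ^ α)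
    (h x y : E) :
    ‖symmSecondDiff f h x - symmSecondDiff f h y‖ ≤ M * ‖x - y‖ ^ α * ‖h‖ ^ 2 := by
  have hf1 : Differentiable ℝ f := hf.differentiable two_ne_zero
  have hf' : Differentiable ℝ (fderiv ℝ f) :=
    (hf.fderiv_right (m := 1) le_rfl).differentiable one_ne_zero
  set G : ℝ → E →L[ℝ] F := fun t : ℝ => fderiv ℝ f (x + t • h) - fderiv ℝ f (y + t • h)
  have hG : ∀ t : ℝ, HasDerivAt G
      (fderiv ℝ (fderiv ℝ f) (x + t • h) h - fderiv ℝ (fderiv ℝ f) (y + t • h) h) t :=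
    fun t => (hasDerivAt_comp_add_smul (hf' _)).sub (hasDerivAt_comp_add_smul (hf' _))
  have hG' : ∀ t : ℝ,
      ‖fderiv ℝ (fderiv ℝ f) (x + t • h) h - fderiv ℝ (fderiv ℝ f) (y + t • h) h‖ ≤
        M * ‖x - y‖ ^ α * ‖h‖ := by
    intro t
    calc _ = ‖(fderiv ℝ (fderiv ℝ f) (x + t • h) - fderiv ℝ (fderiv ℝ f) (y + t • h)) h‖ := rfl
      _ ≤ M * ‖x - y‖ ^ α * ‖h‖ := by
          refine (ContinuousLinearMap.le_opNorm _ _).trans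
            (mul_le_mul_of_nonneg_right ?_ (norm_nonneg _))
          simpa only [add_sub_add_right_eq_sub] using hM (x + t • h) (y + t • h)
  have hg : ∀ t : ℝ, HasDerivAt
      ((fun s : ℝ => f (x + s • h)) - fun s : ℝ => f (y + s • h)) (G t h) t :=
    fun t => (hasDerivAt_comp_add_smul (hf1 _)).sub (hasDerivAt_comp_add_smul (hf1 _))
  have hg' : ∀ s t : ℝ, ‖G s h - G t h‖ ≤ M * ‖x - y‖ ^ α * ‖h‖ ^ 2 * |s - t| ^ (1 : ℝ) := by
    intro s t
    have hlip := convex_univ.norm_image_sub_le_of_norm_hasDerivWithin_le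
      (fun t _ => (hG t).hasDerivWithinAt) (fun t _ => hG' t) (mem_univ t) (mem_univ s)
    calc ‖G s h - G t h‖ = ‖(G s - G t) h‖ := rfl
      _ ≤ ‖G s - G t‖ * ‖h‖ := ContinuousLinearMap.le_opNorm _ _
      _ ≤ M * ‖x - y‖ ^ α * ‖h‖ * ‖s - t‖ * ‖h‖ := by gcongr
      _ = M * ‖x - y‖ ^ α * ‖h‖ ^ 2 * |s - t| ^ (1 : ℝ) := by
          rw [Real.rpow_one, Real.norm_eq_abs]; ring
  have key := norm_symmSecondDiff_le_of_holder_deriv hg hg' zero_le_one zero_le_one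
  rw [symmSecondDiff_sub, symmSecondDiff_comp_add_smul, symmSecondDiff_comp_add_smul] at key
  rwa [Real.rpow_one, Real.one_rpow, mul_one, one_add_one_eq_two, div_self two_ne_zero,
    one_mul] at key

theorem norm_symmSecondDiff_sub_le_mul_norm_sub {f : E → F} {M α : ℝ} (hf : ContDiff ℝ 2 f)
    (hM : ∀ x y, ‖fderiv ℝ (fderiv ℝ f) x - fderiv ℝ (fderiv ℝ f) y‖ ≤ M * ‖x - y‖ ^ α)
    (hα : 0 ≤ α) (h x y : E) :
    ‖symmSecondDiff f h x - symmSecondDiff f h y‖ ≤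
      2 ^ α / (α + 1) * M * ‖h‖ ^ (α + 1) * ‖x - y‖ :=
  convex_univ.norm_image_sub_le_of_norm_hasFDerivWithin_le
    (fun z _ => (hasFDerivAt_symmSecondDiff (hf.differentiable two_ne_zero) h z).hasFDerivWithinAt)
    (fun z _ => norm_symmSecondDiff_fderiv_le hf hM hα h z) (mem_univ y) (mem_univ x)

end Calculus

theorem two_rpow_div_add_one_le_one {α : ℝ} (h₀ : 0 ≤ α) (h₁ : α ≤ 1) : 2 ^ α / (α + 1) ≤ 1 := by
  rw [div_le_one (by linarith)]
  simpa [one_add_one_eq_two, add_comm] using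
    rpow_one_add_le_one_add_mul_self (s := 1) (by norm_num) h₀ h₁

theorem second_difference_estimates_C2gamma
    (n : ℕ) (γ : ℝ) (hγ : γ ∈ Set.Ioo (2 : ℝ) 3) :
    ∃ C > 0, ∀ (v : EuclideanSpace ℝ (Fin n) → ℝ) (M : ℝ)
      (ω : EuclideanSpace ℝ (Fin n)) (ρ : ℝ),
      ContDiff ℝ 2 v → ‖ω‖ = 1 → 0 ≤ ρ →
      (∀ x y : EuclideanSpace ℝ (Fin n),
        ‖iteratedFDeriv ℝ 2 v x - iteratedFDeriv ℝ 2 v y‖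
          ≤ M * ‖x - y‖ ^ (γ - 2)) →
      ∀ x y : EuclideanSpace ℝ (Fin n),
        |(2 * v x - v (x + ρ • ω) - v (x - ρ • ω)) -
            (2 * v y - v (y + ρ • ω) - v (y - ρ • ω))|
          ≤ C * M * min (ρ ^ 2 * ‖x - y‖ ^ (γ - 2)) (ρ ^ (γ - 1) * ‖x - y‖) := by
  obtain ⟨hα₀, hα₁⟩ : 0 < γ - 2 ∧ γ - 2 ≤ 1 := ⟨by linarith [hγ.1], by linarith [hγ.2]⟩
  refine ⟨1, one_pos, fun v M ω ρ hv hω hρ hM x y => ?_⟩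
  have hM' : ∀ a b, ‖fderiv ℝ (fderiv ℝ v) a - fderiv ℝ (fderiv ℝ v) b‖ ≤ M * ‖a - b‖ ^ (γ - 2) :=
    fun a b => (norm_fderiv_fderiv_sub_le v a b).trans (hM a b)
  have hρω : ‖ρ • ω‖ = ρ := by rw [norm_smul, hω, mul_one, Real.norm_of_nonneg hρ]
  change |symmSecondDiff v (ρ • ω) x - symmSecondDiff v (ρ • ω) y| ≤ _
  rw [one_mul, ← Real.norm_eq_abs]
  rcases eq_or_ne x y with rfl | hxy
  · simp [Real.zero_rpow hα₀.ne']
  have hM₀ : 0 ≤ M := nonneg_of_mul_nonneg_left ((norm_nonneg _).trans (hM x y))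
    (Real.rpow_pos_of_pos (norm_pos_iff.2 (sub_ne_zero.2 hxy)) _)
  rw [mul_min_of_nonneg _ _ hM₀]
  refine le_min ?_ ?_
  · refine (norm_symmSecondDiff_sub_le_mul_norm_sq hv hM' _ x y).trans_eq ?_
    rw [hρω]; ring
  · refine (norm_symmSecondDiff_sub_le_mul_norm_sub hv hM' hα₀.le _ x y).trans ?_
    rw [hρω, show γ - 1 = γ - 2 + 1 by ring, mul_assoc, mul_assoc, ← mul_assoc M]
    exact mul_le_of_le_one_left (by positivity) (two_rpow_div_add_one_le_one hα₀.le hα₁)
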